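/- (Main theorem, special case λ = 0, r = 3) In B₃ (with all cᵢ = 0 for simplicity, or general c), the generating function action satisfies ℰ(z,w⁻¹)·1 = (1/E₃(z))·(E₂(z) + (z/w)E₁(z) + z²/w²), where ℰ(z,w⁻¹)·1 is defined by (ℰ(z,w⁻¹)·1)[X]³₀ = ∑_{i,j≥0} zⁱw⁻ʲ · Xⁱ ∧ (∂ʲ ⌟ (X²∧X¹∧X⁰)). In particular the coefficient of z⁵w⁻¹ equals −Δ_{(3,1)}(H₃) = h₄ − h₁h₃. -/

import Mathlib

open PowerSeries Polynomial

set_option synthInstance.maxHeartbeats 1000000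
set_option maxHeartbeats 1000000

noncomputable section

abbrev B0 (n : ℕ) : Type := MvPolynomial (Fin n) ℚ
abbrev Br (n r : ℕ) : Type := MvPolynomial (Fin r) (B0 n)

def cc (n : ℕ) : ℕ → B0 n
  | 0 => 1
  | i + 1 => if h : i < n then MvPolynomial.X ⟨i, h⟩ else 0

def ee (n r : ℕ) : ℕ → Br n r
  | 0 => 1
  | i + 1 => if h : i < r then MvPolynomial.X ⟨i, h⟩ else 0

/-- c(z) = ∑ (-1)^i cᵢ zⁱ, viewed over Bᵣ -/
def cser (n r : ℕ) : PowerSeries (Br n r) :=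
  PowerSeries.mk fun i => (-1) ^ i * MvPolynomial.C (cc n i)

/-- Eᵣ(z) = ∑ (-1)^i eᵢ zⁱ -/
def Eser (n r : ℕ) : PowerSeries (Br n r) :=
  PowerSeries.mk fun i => (-1) ^ i * ee n r i

/-- H(z) = 1/Eᵣ(z) -/
def Hser (n r : ℕ) : PowerSeries (Br n r) := (Eser n r).invOfUnit 1

/-- hⱼ : coefficient of zʲ in 1/Eᵣ(z) -/
def hpl (n r : ℕ) (j : ℕ) : Br n r := PowerSeries.coeff j (Hser n r)

/-- hⱼ(c) : coefficient of zʲ in c(z)/Eᵣ(z) -/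
def hcc (n r : ℕ) (j : ℕ) : Br n r := PowerSeries.coeff j (cser n r * Hser n r)

def hplZ (n r : ℕ) (j : ℤ) : Br n r := if 0 ≤ j then hpl n r j.toNat else 0
def hccZ (n r : ℕ) (j : ℤ) : Br n r := if 0 ≤ j then hcc n r j.toNat else 0

/-- the ideal I_{r,n}(c) = (h_{n-r+1}(c),…,hₙ(c)) -/
def Irn (n r : ℕ) : Ideal (Br n r) := Ideal.span (hcc n r '' Set.Icc (n - r + 1) n)

/-- Xʲ(c) = ∑ᵢ (-1)ⁱ cᵢ X^{j-i} -/
def Xc (n : ℕ) (j : ℕ) : Polynomial (B0 n) :=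
  ∑ i ∈ Finset.range (j + 1),
    (-1 : Polynomial (B0 n)) ^ i * Polynomial.C (cc n i) * Polynomial.X ^ (j - i)

/-- the Schur determinant Δ_λ(Hᵣ(c)) -/
def Dl (n r : ℕ) (lam : Fin r → ℕ) : Br n r :=
  Matrix.det (Matrix.of fun i j : Fin r => hccZ n r ((lam j : ℤ) + (i : ℤ) - (j : ℤ)))

abbrev ExtA (n : ℕ) : Type := ExteriorAlgebra (B0 n) (Polynomial (B0 n))

def wedge (n r : ℕ) (g : Fin r → Polynomial (B0 n)) : ExtA n :=
  ExteriorAlgebra.ιMulti (B0 n) r g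

/-- the Laksov–Thorup module structure: eᵢ acts as the component σ̄ᵢ of the
inverse Schubert derivation, i.e. `σ̄(z)(v₁∧⋯∧vᵣ) = ∏ (vⱼ - X·vⱼ z)`. -/
def ActSpec (n r : ℕ)
    (act : Br n r →ₐ[B0 n] Module.End (B0 n) (ExtA n)) : Prop :=
  ∀ (i : Fin r) (g : Fin r → Polynomial (B0 n)),
    act (MvPolynomial.X i) (wedge n r g) =
      ∑ S ∈ Finset.powersetCard ((i : ℕ) + 1) (Finset.univ : Finset (Fin r)),
        wedge n r fun j => if j ∈ S then Polynomial.X * g j else g j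

end
noncomputable section
/-- E₂(z) = 1 - h₁z + (h₁² - h₂)z², inside B₃ (here all cᵢ = 0, i.e. n = 0). -/
def E2ser : PowerSeries (Br 0 3) :=
  PowerSeries.mk fun i =>
    if i = 0 then 1 else if i = 1 then -hpl 0 3 1
    else if i = 2 then hpl 0 3 1 ^ 2 - hpl 0 3 2 else 0

/-- E₁(z) = 1 - h₁z. -/
def E1ser : PowerSeries (Br 0 3) :=
  PowerSeries.mk fun i => if i = 0 then 1 else if i = 1 then -hpl 0 3 1 else 0

/-- the coefficient of zⁱw⁻ʲ in (1/E₃(z))·(E₂(z) + (z/w)E₁(z) + z²/w²). -/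
def coefRHS (i j : ℕ) : Br 0 3 :=
  if j = 0 then PowerSeries.coeff i (Hser 0 3 * E2ser)
  else if j = 1 then (if 1 ≤ i then PowerSeries.coeff (i - 1) (Hser 0 3 * E1ser) else 0)
  else if j = 2 then (if 2 ≤ i then PowerSeries.coeff (i - 2) (Hser 0 3) else 0)
  else 0
end

/-!
Put `g_m := [z^m] z²H(z)`. Since `z²H(z)·E₃(z) = z²`, the `g_m` satisfy
`g_{m+3} = e₁ g_{m+2} - e₂ g_{m+1} + e₃ g_m` with `g₀ = g₁ = 0`, `g₂ = 1`. The operator `eₖ`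
multiplies `k` of the three factors of a wedge by `X` in all possible ways; applied to
`X^m ∧ X ∧ 1`, the terms with a repeated factor vanish and the others telescope, so by induction
`g_m · (X² ∧ X ∧ 1) = X^m ∧ X ∧ 1`. As `h₁ = e₁` and `h₁² - h₂ = e₂`, `E₂` and `E₁` are
truncations of `E₃`, and the `z^i w^{-j}` coefficients of the right-hand side are
`g_{i+2} - e₁ g_{i+1} + e₂ g_i`, `g_{i+1} - e₁ g_i` and `g_i` for `j = 0, 1, 2`. They send
`X² ∧ X ∧ 1` to `X^i ∧ X² ∧ X`, `-X^i ∧ X² ∧ 1` and `X^i ∧ X ∧ 1`: the three terms of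
`X^i ∧ (∂ʲ ⌟ (X² ∧ X ∧ 1))`.
-/

theorem Eser_mul_Hser (n r : ℕ) : Eser n r * Hser n r = 1 :=
  PowerSeries.mul_invOfUnit _ 1 (by simp [Eser, ee])

theorem Eser_three (n : ℕ) :
    Eser n 3 = 1 - PowerSeries.C (ee n 3 1) * PowerSeries.X
      + PowerSeries.C (ee n 3 2) * PowerSeries.X ^ 2
      - PowerSeries.C (ee n 3 3) * PowerSeries.X ^ 3 := by
  refine PowerSeries.ext fun k => ?_
  simp only [Eser, PowerSeries.coeff_mk, map_sub, map_add, PowerSeries.coeff_one,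
    PowerSeries.coeff_C_mul, PowerSeries.coeff_X, PowerSeries.coeff_X_pow]
  rcases k with _ | _ | _ | _ | k <;> simp [ee] <;> ring

theorem hpl_zero (n r : ℕ) : hpl n r 0 = 1 := by
  simp [hpl, Hser]

theorem hcc_zero_eq_hpl (r : ℕ) : hcc 0 r = hpl 0 r := by
  have hc : cser 0 r = 1 := by
    refine PowerSeries.ext fun k => ?_
    rcases k with _ | k <;> simp [cser, cc]
  funext j
  rw [hcc, hpl, hc, one_mul]

theorem Dl_three_one_zero : Dl 0 3 ![3, 1, 0] = hpl 0 3 3 * hpl 0 3 1 - hpl 0 3 4 := by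
  rw [Dl, Matrix.det_fin_three]
  simp [hccZ, hcc_zero_eq_hpl, hpl_zero]

theorem coeff_mul_C_mul_X_pow {R : Type*} [CommSemiring R] (f : PowerSeries R) (a : R)
    (k m : ℕ) :
    PowerSeries.coeff m (f * (PowerSeries.C a * PowerSeries.X ^ k)) =
      if k ≤ m then a * PowerSeries.coeff (m - k) f else 0 := by
  rw [mul_left_comm, ← mul_assoc, PowerSeries.coeff_mul_X_pow', PowerSeries.coeff_C_mul]

theorem coeff_mul_C_mul_X {R : Type*} [CommSemiring R] (f : PowerSeries R) (a : R) (m : ℕ) :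
    PowerSeries.coeff m (f * (PowerSeries.C a * PowerSeries.X)) =
      if 1 ≤ m then a * PowerSeries.coeff (m - 1) f else 0 := by
  rw [← coeff_mul_C_mul_X_pow, pow_one]

theorem coeff_X_sq_mul_Hser_add_two (n k : ℕ) :
    PowerSeries.coeff (k + 2) (PowerSeries.X ^ 2 * Hser n 3) = hpl n 3 k :=
  PowerSeries.coeff_X_pow_mul _ _ _

theorem coeff_X_sq_mul_Hser_two (n : ℕ) :
    PowerSeries.coeff 2 (PowerSeries.X ^ 2 * Hser n 3) = 1 :=
  (coeff_X_sq_mul_Hser_add_two n 0).trans (hpl_zero n 3)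

theorem coeff_X_sq_mul_Hser_of_lt_two (n : ℕ) {m : ℕ} (hm : m < 2) :
    PowerSeries.coeff m (PowerSeries.X ^ 2 * Hser n 3) = 0 := by
  simp [PowerSeries.coeff_X_pow_mul', Nat.not_le.mpr hm]

theorem coeff_X_sq_mul_Hser_add_three (n m : ℕ) :
    PowerSeries.coeff (m + 3) (PowerSeries.X ^ 2 * Hser n 3) =
      ee n 3 1 * PowerSeries.coeff (m + 2) (PowerSeries.X ^ 2 * Hser n 3)
        - ee n 3 2 * PowerSeries.coeff (m + 1) (PowerSeries.X ^ 2 * Hser n 3)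
        + ee n 3 3 * PowerSeries.coeff m (PowerSeries.X ^ 2 * Hser n 3) := by
  have hG : PowerSeries.X ^ 2 * Hser n 3 * Eser n 3 = PowerSeries.X ^ 2 := by
    rw [mul_assoc, mul_comm (Hser n 3), Eser_mul_Hser, mul_one]
  have h := congrArg (PowerSeries.coeff (m + 3)) hG
  rw [Eser_three] at h
  simp only [mul_sub, mul_add, mul_one, map_sub, map_add, coeff_mul_C_mul_X_pow,
    coeff_mul_C_mul_X, PowerSeries.coeff_X_pow, Nat.le_add_left, if_true, Nat.add_sub_cancel,
    Nat.reduceSubDiff, Nat.reduceEqDiff, if_false] at h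
  linear_combination h

theorem hpl_one (n : ℕ) : hpl n 3 1 = ee n 3 1 := by
  rw [← coeff_X_sq_mul_Hser_add_two, coeff_X_sq_mul_Hser_add_three]
  simp [coeff_X_sq_mul_Hser_two, coeff_X_sq_mul_Hser_of_lt_two]

theorem hpl_one_sq_sub_hpl_two (n : ℕ) : hpl n 3 1 ^ 2 - hpl n 3 2 = ee n 3 2 := by
  rw [← coeff_X_sq_mul_Hser_add_two n 2, coeff_X_sq_mul_Hser_add_three,
    coeff_X_sq_mul_Hser_add_two n 1, hpl_one]
  simp [coeff_X_sq_mul_Hser_two, coeff_X_sq_mul_Hser_of_lt_two]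
  ring

theorem E2ser_eq : E2ser = 1 - PowerSeries.C (ee 0 3 1) * PowerSeries.X
    + PowerSeries.C (ee 0 3 2) * PowerSeries.X ^ 2 := by
  refine PowerSeries.ext fun k => ?_
  rw [E2ser, PowerSeries.coeff_mk, ← hpl_one, ← hpl_one_sq_sub_hpl_two]
  generalize hpl 0 3 1 ^ 2 - hpl 0 3 2 = b
  rcases k with _ | _ | _ | k <;> simp [PowerSeries.coeff_X_pow]

theorem E1ser_eq : E1ser = 1 - PowerSeries.C (ee 0 3 1) * PowerSeries.X := by
  refine PowerSeries.ext fun k => ?_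
  rw [E1ser, PowerSeries.coeff_mk, ← hpl_one]
  rcases k with _ | _ | k <;> simp

theorem coefRHS_zero (i : ℕ) :
    coefRHS i 0 = PowerSeries.coeff (i + 2) (PowerSeries.X ^ 2 * Hser 0 3)
      - ee 0 3 1 * PowerSeries.coeff (i + 1) (PowerSeries.X ^ 2 * Hser 0 3)
      + ee 0 3 2 * PowerSeries.coeff i (PowerSeries.X ^ 2 * Hser 0 3) := by
  rw [coefRHS, if_pos rfl, ← PowerSeries.coeff_X_pow_mul _ 2, ← mul_assoc, E2ser_eq]
  simp only [mul_add, mul_sub, mul_one, map_add, map_sub, coeff_mul_C_mul_X,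
    coeff_mul_C_mul_X_pow]
  simp

theorem coefRHS_one (i : ℕ) :
    coefRHS i 1 = PowerSeries.coeff (i + 1) (PowerSeries.X ^ 2 * Hser 0 3)
      - ee 0 3 1 * PowerSeries.coeff i (PowerSeries.X ^ 2 * Hser 0 3) := by
  have : coefRHS i 1 = PowerSeries.coeff (i + 1) (PowerSeries.X ^ 2 * (Hser 0 3 * E1ser)) := by
    rw [coefRHS, PowerSeries.coeff_X_pow_mul']
    simp
  rw [this, ← mul_assoc, E1ser_eq]
  simp only [mul_sub, mul_one, map_sub, coeff_mul_C_mul_X]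
  simp

theorem coefRHS_two (i : ℕ) :
    coefRHS i 2 = PowerSeries.coeff i (PowerSeries.X ^ 2 * Hser 0 3) := by
  rw [coefRHS, PowerSeries.coeff_X_pow_mul']
  simp

theorem coefRHS_of_three_le (i : ℕ) {j : ℕ} (hj : 3 ≤ j) : coefRHS i j = 0 := by
  rw [coefRHS, if_neg (by omega), if_neg (by omega), if_neg (by omega)]

theorem wedge_three (n : ℕ) (g : Fin 3 → Polynomial (B0 n)) :
    wedge n 3 g = ExteriorAlgebra.ι (B0 n) (g 0) * ExteriorAlgebra.ι (B0 n) (g 1)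
      * ExteriorAlgebra.ι (B0 n) (g 2) := by
  simp [wedge, ExteriorAlgebra.ιMulti_apply, mul_assoc]
  rfl

theorem wedge_three_self_right (n : ℕ) (u v : Polynomial (B0 n)) : wedge n 3 ![u, v, v] = 0 :=
  AlternatingMap.map_eq_zero_of_eq _ _ (i := 1) (j := 2) rfl (by decide)

theorem contractLeft_ι_mul_ι_mul_ι {R M : Type*} [CommRing R] [AddCommGroup M] [Module R M]
    (d : Module.Dual R M) (a b c : M) :
    CliffordAlgebra.contractLeft (Q := (0 : QuadraticForm R M)) d
        (ExteriorAlgebra.ι R a * ExteriorAlgebra.ι R b * ExteriorAlgebra.ι R c) =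
      d a • (ExteriorAlgebra.ι R b * ExteriorAlgebra.ι R c)
        - d b • (ExteriorAlgebra.ι R a * ExteriorAlgebra.ι R c)
        + d c • (ExteriorAlgebra.ι R a * ExteriorAlgebra.ι R b) := by
  rw [mul_assoc, CliffordAlgebra.contractLeft_ι_mul, CliffordAlgebra.contractLeft_ι_mul,
    CliffordAlgebra.contractLeft_ι, mul_sub, mul_smul_comm, ← Algebra.commutes (d c),
    ← Algebra.smul_def, mul_smul_comm]
  abel

theorem ι_mul_contractLeft_wedge_three {n : ℕ} (x : Polynomial (B0 n))
    (d : Module.Dual (B0 n) (Polynomial (B0 n))) (a b c : Polynomial (B0 n)) :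
    ExteriorAlgebra.ι (B0 n) x *
        CliffordAlgebra.contractLeft (Q := (0 : QuadraticForm (B0 n) (Polynomial (B0 n)))) d
          (wedge n 3 ![a, b, c]) =
      d a • wedge n 3 ![x, b, c] - d b • wedge n 3 ![x, a, c] + d c • wedge n 3 ![x, a, b] := by
  simp only [wedge_three, Matrix.cons_val_zero, Matrix.cons_val_one, Matrix.cons_val_two,
    Matrix.head_cons, Matrix.tail_cons]
  rw [contractLeft_ι_mul_ι_mul_ι, mul_add, mul_sub, mul_smul_comm, mul_smul_comm, mul_smul_comm]
  simp only [mul_assoc]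

namespace ActSpec

section

variable {n : ℕ} {act : Br n 3 →ₐ[B0 n] Module.End (B0 n) (ExtA n)}

theorem apply_ee_one (hact : ActSpec n 3 act) (u v w : Polynomial (B0 n)) :
    act (ee n 3 1) (wedge n 3 ![u, v, w]) =
      wedge n 3 ![Polynomial.X * u, v, w] + wedge n 3 ![u, Polynomial.X * v, w]
        + wedge n 3 ![u, v, Polynomial.X * w] := by
  have : Finset.powersetCard 1 (Finset.univ : Finset (Fin 3)) = {{0}, {1}, {2}} := by decide
  rw [show ee n 3 1 = MvPolynomial.X 0 from rfl, hact, Fin.val_zero, Nat.zero_add, this,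
    Finset.sum_insert (by decide), Finset.sum_insert (by decide), Finset.sum_singleton]
  simp [wedge_three, add_assoc]

theorem apply_ee_two (hact : ActSpec n 3 act) (u v w : Polynomial (B0 n)) :
    act (ee n 3 2) (wedge n 3 ![u, v, w]) =
      wedge n 3 ![Polynomial.X * u, Polynomial.X * v, w]
        + wedge n 3 ![Polynomial.X * u, v, Polynomial.X * w]
        + wedge n 3 ![u, Polynomial.X * v, Polynomial.X * w] := by
  have : Finset.powersetCard 2 (Finset.univ : Finset (Fin 3)) = {{0, 1}, {0, 2}, {1, 2}} := by
    decide
  rw [show ee n 3 2 = MvPolynomial.X 1 from rfl, hact,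
    show ((1 : Fin 3) : ℕ) + 1 = 2 from rfl, this,
    Finset.sum_insert (by decide), Finset.sum_insert (by decide), Finset.sum_singleton]
  simp [wedge_three, add_assoc]

theorem apply_ee_three (hact : ActSpec n 3 act) (u v w : Polynomial (B0 n)) :
    act (ee n 3 3) (wedge n 3 ![u, v, w]) =
      wedge n 3 ![Polynomial.X * u, Polynomial.X * v, Polynomial.X * w] := by
  have : Finset.powersetCard 3 (Finset.univ : Finset (Fin 3)) = {Finset.univ} := by decide
  rw [show ee n 3 3 = MvPolynomial.X 2 from rfl, hact,
    show ((2 : Fin 3) : ℕ) + 1 = 3 from rfl, this]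
  simp [wedge_three]

theorem apply_coeff_X_sq_mul_Hser (hact : ActSpec n 3 act) (m : ℕ) :
    act (PowerSeries.coeff m (PowerSeries.X ^ 2 * Hser n 3))
        (wedge n 3 ![Polynomial.X ^ 2, Polynomial.X, 1]) =
      wedge n 3 ![Polynomial.X ^ m, Polynomial.X, 1] := by
  induction m using Nat.strong_induction_on with
  | _ m ih =>
    match m, ih with
    | 0, _ =>
      rw [coeff_X_sq_mul_Hser_of_lt_two n two_pos, map_zero, LinearMap.zero_apply, pow_zero]
      exact (AlternatingMap.map_eq_zero_of_eq _ _ (i := 0) (j := 2) rfl (by decide)).symm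
    | 1, _ =>
      rw [coeff_X_sq_mul_Hser_of_lt_two n one_lt_two, map_zero, LinearMap.zero_apply, pow_one]
      exact (AlternatingMap.map_eq_zero_of_eq _ _ (i := 0) (j := 1) rfl (by decide)).symm
    | 2, _ => rw [coeff_X_sq_mul_Hser_two, map_one, Module.End.one_apply]
    | m + 3, ih =>
      rw [coeff_X_sq_mul_Hser_add_three, map_add, map_sub, map_mul act, map_mul act, map_mul act,
        LinearMap.add_apply, LinearMap.sub_apply, Module.End.mul_apply, Module.End.mul_apply,
        Module.End.mul_apply, ih (m + 2) (by omega), ih (m + 1) (by omega), ih m (by omega),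
        hact.apply_ee_one, hact.apply_ee_two, hact.apply_ee_three]
      simp only [← pow_succ', ← sq, mul_one, wedge_three_self_right, add_zero, add_assoc,
        Nat.reduceAdd]
      abel

end

section

variable {act : Br 0 3 →ₐ[B0 0] Module.End (B0 0) (ExtA 0)}

theorem apply_coefRHS_zero (hact : ActSpec 0 3 act) (i : ℕ) :
    act (coefRHS i 0) (wedge 0 3 ![Polynomial.X ^ 2, Polynomial.X, 1]) =
      wedge 0 3 ![Polynomial.X ^ i, Polynomial.X ^ 2, Polynomial.X] := by
  rw [coefRHS_zero, map_add, map_sub, map_mul act, map_mul act, LinearMap.add_apply,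
    LinearMap.sub_apply, Module.End.mul_apply, Module.End.mul_apply,
    hact.apply_coeff_X_sq_mul_Hser, hact.apply_coeff_X_sq_mul_Hser,
    hact.apply_coeff_X_sq_mul_Hser, hact.apply_ee_one, hact.apply_ee_two]
  simp only [← pow_succ', ← sq, mul_one, wedge_three_self_right, add_zero]
  abel

theorem apply_coefRHS_one (hact : ActSpec 0 3 act) (i : ℕ) :
    act (coefRHS i 1) (wedge 0 3 ![Polynomial.X ^ 2, Polynomial.X, 1]) =
      -wedge 0 3 ![Polynomial.X ^ i, Polynomial.X ^ 2, 1] := by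
  rw [coefRHS_one, map_sub, map_mul act, LinearMap.sub_apply, Module.End.mul_apply,
    hact.apply_coeff_X_sq_mul_Hser, hact.apply_coeff_X_sq_mul_Hser, hact.apply_ee_one]
  simp only [← pow_succ', ← sq, mul_one, wedge_three_self_right, add_zero]
  abel

theorem apply_coefRHS_two (hact : ActSpec 0 3 act) (i : ℕ) :
    act (coefRHS i 2) (wedge 0 3 ![Polynomial.X ^ 2, Polynomial.X, 1]) =
      wedge 0 3 ![Polynomial.X ^ i, Polynomial.X, 1] := by
  rw [coefRHS_two, hact.apply_coeff_X_sq_mul_Hser]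

end

end ActSpec

/-- ℰ(z,w⁻¹)·1 = (1/E₃(z))(E₂(z) + (z/w)E₁(z) + z²/w²) in B₃
(all cᵢ = 0), stated coefficientwise: Xⁱ ∧ (∂ʲ ⌟ (X²∧X¹∧X⁰)) equals the
(i,j)-coefficient acting on [X]³₀; in particular the coefficient of z⁵w⁻¹ is
h₄ - h₁h₃ = -Δ_{(3,1)}(H₃). -/
theorem stmt18 (act : Br 0 3 →ₐ[B0 0] Module.End (B0 0) (ExtA 0))
    (hact : ActSpec 0 3 act) :
    (∀ i j : ℕ,
      ExteriorAlgebra.ι (B0 0) (Polynomial.X ^ i) *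
          CliffordAlgebra.contractLeft
            (Q := (0 : QuadraticForm (B0 0) (Polynomial (B0 0))))
            (Polynomial.lcoeff (B0 0) j)
            (wedge 0 3 fun t => Polynomial.X ^ (2 - (t : ℕ))) =
        act (coefRHS i j) (wedge 0 3 fun t => Polynomial.X ^ (2 - (t : ℕ)))) ∧
    coefRHS 5 1 = hpl 0 3 4 - hpl 0 3 1 * hpl 0 3 3 ∧
    coefRHS 5 1 = -Dl 0 3 ![3, 1, 0] := by
  have hcoef : coefRHS 5 1 = hpl 0 3 4 - hpl 0 3 1 * hpl 0 3 3 := by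
    rw [coefRHS_one, coeff_X_sq_mul_Hser_add_two, coeff_X_sq_mul_Hser_add_two, hpl_one]
  have hv : (wedge 0 3 fun t => Polynomial.X ^ (2 - (t : ℕ))) =
      wedge 0 3 ![Polynomial.X ^ 2, Polynomial.X, 1] := by
    congr 1
    funext t
    fin_cases t <;> simp
  refine ⟨fun i j => ?_, hcoef, by rw [hcoef, Dl_three_one_zero]; ring⟩
  rw [hv, ι_mul_contractLeft_wedge_three]
  rcases j with _ | _ | _ | j
  · simp [hact.apply_coefRHS_zero, Polynomial.coeff_one]
  · simp [hact.apply_coefRHS_one, Polynomial.coeff_X, Polynomial.coeff_one]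
  · simp [hact.apply_coefRHS_two, Polynomial.coeff_X, Polynomial.coeff_one]
  · simp [coefRHS_of_three_le, Polynomial.coeff_X, Polynomial.coeff_one]
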